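/- arXiv:1908.11631 — 5 statements merged into one kernel-verified Lean document; each statement's English description precedes it below -/
import Mathlib

section
/- Let G = (V,E) be a finite simple graph that is (3,γ)-vector colorable for some 0 < γ < 1/10. Then for every vertex i ∈ V, the subgraph of G induced on the neighborhood N(i) of i is (2,4γ)-vector colorable. -/
/-- A graph `G` is `(k, γ)`-vector colorable if there are unit vectors `v i` in some
Euclidean space `ℝ^d` with `⟨v i, v j⟩ ≤ -1/(k-1) + γ` for every edge `{i, j}`. -/
def VectorColorable {V : Type*} (G : SimpleGraph V) (k : ℕ) (γ : ℝ) : Prop :=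
  ∃ (d : ℕ) (v : V → EuclideanSpace ℝ (Fin d)),
    (∀ i, ‖v i‖ = 1) ∧
    ∀ i j, G.Adj i j → (inner ℝ (v i) (v j) : ℝ) ≤ -(1 / ((k : ℝ) - 1)) + γ

/-!
Project the vectors of the neighbours of `i` onto the hyperplane orthogonal to `v i` and
normalize. For unit vectors with pairwise inner products at most `-1/2 + γ`, the projections
`u, w` of `y, z` orthogonal to `x` satisfy `⟪u, w⟫ = ⟪y, z⟫ - ⟪x, y⟫⟪x, z⟫ ≤ -c - c²` with
`c = 1/2 - γ`, while `‖u‖‖w‖ ≤ 1 - c²`; the identity `4c³ - 3c + 1 = (c + 1)(2c - 1)²` turns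
this into `⟪u, w⟫ ≤ (-1 + 4γ)‖u‖‖w‖`.
-/

open RealInnerProductSpace

lemma sub_mul_le_of_le_neg_half_add {s a b p q γ : ℝ} (hγ : γ ≤ 1 / 4)
    (hs : s ≤ -(1 / 2) + γ) (ha : a ≤ -(1 / 2) + γ) (hb : b ≤ -(1 / 2) + γ)
    (hp : 0 ≤ p) (hq : 0 ≤ q) (hpa : p ^ 2 = 1 - a ^ 2) (hqb : q ^ 2 = 1 - b ^ 2) :
    s - a * b ≤ (-1 + 4 * γ) * (p * q) := by
  set c := 1 / 2 - γ with hc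
  have hc4 : 1 / 4 ≤ c := by linarith
  have hab : c ^ 2 ≤ a * b := by nlinarith
  have ha2 : c ^ 2 ≤ a ^ 2 := by nlinarith
  have hb2 : c ^ 2 ≤ b ^ 2 := by nlinarith
  have hc1 : c ^ 2 ≤ 1 := by nlinarith
  have hpq : p * q ≤ 1 - c ^ 2 := by
    have : (p * q) ^ 2 ≤ (1 - c ^ 2) ^ 2 := by
      rw [mul_pow, hpa, hqb, sq (1 - c ^ 2)]
      exact mul_le_mul (by linarith) (by linarith) (hqb ▸ sq_nonneg q) (sub_nonneg.2 hc1)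
    exact (pow_le_pow_iff_left₀ (by positivity) (sub_nonneg.2 hc1) two_ne_zero).1 this
  have hcube : 0 ≤ (c + 1) * (2 * c - 1) ^ 2 := by positivity
  nlinarith

section Rejection

variable {F : Type*} [NormedAddCommGroup F] [InnerProductSpace ℝ F]

/-- The component of `y` orthogonal to `x`, when `x` is a unit vector. -/
def rejection (x y : F) : F := y - ⟪x, y⟫ • x

lemma inner_rejection_rejection {x : F} (hx : ‖x‖ = 1) (y z : F) :
    ⟪rejection x y, rejection x z⟫ = ⟪y, z⟫ - ⟪x, y⟫ * ⟪x, z⟫ := by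
  have hxx : ⟪x, x⟫ = 1 := by rw [real_inner_self_eq_norm_sq, hx, one_pow]
  simp only [rejection, inner_sub_left, inner_sub_right, real_inner_smul_left,
    real_inner_smul_right, hxx, real_inner_comm x y]
  ring

lemma norm_rejection_sq {x y : F} (hx : ‖x‖ = 1) (hy : ‖y‖ = 1) :
    ‖rejection x y‖ ^ 2 = 1 - ⟪x, y⟫ ^ 2 := by
  rw [← real_inner_self_eq_norm_sq, inner_rejection_rejection hx, real_inner_self_eq_norm_sq,
    hy]
  ring

variable {x y z : F} {γ : ℝ}

lemma inner_rejection_rejection_neg (hx : ‖x‖ = 1) (hγ : γ < 1 / 2)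
    (hxy : ⟪x, y⟫ ≤ -(1 / 2) + γ) (hxz : ⟪x, z⟫ ≤ -(1 / 2) + γ) (hyz : ⟪y, z⟫ ≤ -(1 / 2) + γ) :
    ⟪rejection x y, rejection x z⟫ < 0 := by
  rw [inner_rejection_rejection hx]
  nlinarith [mul_le_mul_of_nonpos_left hxz (by linarith : ⟪x, y⟫ ≤ 0)]

lemma inner_rejection_rejection_le (hx : ‖x‖ = 1) (hy : ‖y‖ = 1) (hz : ‖z‖ = 1)
    (hγ : γ ≤ 1 / 4) (hxy : ⟪x, y⟫ ≤ -(1 / 2) + γ) (hxz : ⟪x, z⟫ ≤ -(1 / 2) + γ)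
    (hyz : ⟪y, z⟫ ≤ -(1 / 2) + γ) :
    ⟪rejection x y, rejection x z⟫ ≤ (-1 + 4 * γ) * (‖rejection x y‖ * ‖rejection x z‖) := by
  rw [inner_rejection_rejection hx]
  exact sub_mul_le_of_le_neg_half_add hγ hyz hxy hxz (norm_nonneg _) (norm_nonneg _)
    (norm_rejection_sq hx hy) (norm_rejection_sq hx hz)

end Rejection

lemma vectorColorable_of_inner_le_mul_norm {V : Type*} {G : SimpleGraph V} {k : ℕ} {γ : ℝ}
    {d : ℕ} {e : EuclideanSpace ℝ (Fin d)} (he : ‖e‖ = 1) (u : V → EuclideanSpace ℝ (Fin d))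
    (hne : ∀ i j, G.Adj i j → u i ≠ 0)
    (hu : ∀ i j, G.Adj i j → ⟪u i, u j⟫ ≤ (-(1 / ((k : ℝ) - 1)) + γ) * (‖u i‖ * ‖u j‖)) :
    VectorColorable G k γ := by
  classical
  refine ⟨d, fun i => if u i = 0 then e else ‖u i‖⁻¹ • u i, fun i => ?_, fun i j hij => ?_⟩
  · dsimp only
    split_ifs with hi
    exacts [he, norm_smul_inv_norm hi]
  · have hi := hne i j hij
    have hj := hne j i hij.symm
    have hpos : 0 < ‖u i‖ * ‖u j‖ := mul_pos (norm_pos_iff.2 hi) (norm_pos_iff.2 hj)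
    simp only [if_neg hi, if_neg hj, real_inner_smul_left, real_inner_smul_right]
    rw [show ‖u j‖⁻¹ * (‖u i‖⁻¹ * ⟪u i, u j⟫) = ⟪u i, u j⟫ / (‖u i‖ * ‖u j‖) by ring,
      div_le_iff₀ hpos]
    exact hu i j hij

theorem stmt0_general {V : Type*} (G : SimpleGraph V) (γ : ℝ)
    (hγ1 : γ < 1 / 10)
    (h : VectorColorable G 3 γ) (i : V) :
    VectorColorable (G.induce (G.neighborSet i)) 2 (4 * γ) := by
  obtain ⟨d, v, hv, hadj⟩ := h
  have hedge (j k : V) (hjk : G.Adj j k) : ⟪v j, v k⟫ ≤ -(1 / 2) + γ :=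
    (hadj j k hjk).trans_eq (by norm_num)
  refine vectorColorable_of_inner_le_mul_norm (hv i)
    (fun j : G.neighborSet i => rejection (v i) (v j)) ?_ ?_
  · rintro ⟨j, hj⟩ ⟨k, hk⟩ hjk hzero
    have := inner_rejection_rejection_neg (hv i) (by linarith) (hedge _ _ hj) (hedge _ _ hk)
      (hedge _ _ hjk)
    simp [hzero] at this
  · rintro ⟨j, hj⟩ ⟨k, hk⟩ hjk
    exact (inner_rejection_rejection_le (hv i) (hv j) (hv k) (by linarith) (hedge _ _ hj)
      (hedge _ _ hk) (hedge _ _ hjk)).trans_eq (by norm_num)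

theorem stmt0 {V : Type*} [Fintype V] (G : SimpleGraph V) (γ : ℝ)
    (hγ0 : 0 < γ) (hγ1 : γ < 1 / 10)
    (h : VectorColorable G 3 γ) (i : V) :
    VectorColorable (G.induce (G.neighborSet i)) 2 (4 * γ) :=
  stmt0_general G γ hγ1 h i
end

section
/- Let G = (V,E) be a finite simple graph that is (2,γ)-vector colorable for some 0 < γ ≤ 1/16. Then G contains no odd cycle of length at most 1/(8√γ); that is, G has no cycle whose length ℓ is odd and satisfies ℓ ≤ 1/(8√γ). -/
section

variable {E : Type*} [NormedAddCommGroup E] [InnerProductSpace ℝ E]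

lemma norm_add_le_sqrt_of_inner_le {x y : E} (hx : ‖x‖ = 1) (hy : ‖y‖ = 1) {γ : ℝ}
    (h : inner ℝ x y ≤ -1 + γ) : ‖x + y‖ ≤ √(2 * γ) := by
  apply Real.le_sqrt_of_sq_le
  rw [norm_add_sq_real, hx, hy]
  linarith

namespace SimpleGraph.Walk

variable {V : Type*} {G : SimpleGraph V} {v : V → E} {c : ℝ}

lemma norm_sub_neg_one_pow_smul_le (hv : ∀ i j, G.Adj i j → ‖v i + v j‖ ≤ c) :
    ∀ {x y : V} (p : G.Walk x y), ‖v x - (-1 : ℝ) ^ p.length • v y‖ ≤ p.length * c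
  | _, _, nil => by simp
  | x, y, cons (v := z) hxz q => by
    have hsplit : v x - (-1 : ℝ) ^ (q.length + 1) • v y
        = (v x + v z) - (v z - (-1 : ℝ) ^ q.length • v y) := by
      rw [pow_succ]
      module
    calc ‖v x - (-1 : ℝ) ^ (cons hxz q).length • v y‖
        = ‖(v x + v z) - (v z - (-1 : ℝ) ^ q.length • v y)‖ := by rw [length_cons, hsplit]
      _ ≤ ‖v x + v z‖ + ‖v z - (-1 : ℝ) ^ q.length • v y‖ := norm_sub_le _ _
      _ ≤ c + q.length * c := add_le_add (hv x z hxz) (norm_sub_neg_one_pow_smul_le hv q)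
      _ = (cons hxz q).length * c := by rw [length_cons]; push_cast; ring

lemma two_mul_norm_le_of_odd_length (hv : ∀ i j, G.Adj i j → ‖v i + v j‖ ≤ c) {a : V}
    (w : G.Walk a a) (hodd : Odd w.length) : 2 * ‖v a‖ ≤ w.length * c := by
  have hw := norm_sub_neg_one_pow_smul_le hv w
  rwa [hodd.neg_one_pow, neg_one_smul, sub_neg_eq_add, ← two_smul ℝ, norm_smul,
    Real.norm_two] at hw

end SimpleGraph.Walk

end

lemma VectorColorable.two_le_length_mul_sqrt {V : Type*} {G : SimpleGraph V} {γ : ℝ}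
    (h : VectorColorable G 2 γ) {a : V} (w : G.Walk a a) (hodd : Odd w.length) :
    2 ≤ w.length * √(2 * γ) := by
  obtain ⟨d, v, hunit, hadj⟩ := h
  have hedge : ∀ i j, G.Adj i j → ‖v i + v j‖ ≤ √(2 * γ) := fun i j hij =>
    norm_add_le_sqrt_of_inner_le (hunit i) (hunit j) ((hadj i j hij).trans_eq (by norm_num))
  simpa [hunit a] using w.two_mul_norm_le_of_odd_length hedge hodd

theorem stmt1_general {V : Type*} (G : SimpleGraph V) (γ : ℝ)
    (h : VectorColorable G 2 γ) :
    ∀ (a : V) (w : G.Walk a a), w.IsCycle → Odd w.length →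
      ¬ ((w.length : ℝ) ≤ 1 / (8 * Real.sqrt γ)) := by
  intro a w _ hodd hle
  have hlower := h.two_le_length_mul_sqrt w hodd
  have hupper : (w.length : ℝ) * (8 * √γ) ≤ 1 :=
    mul_le_of_le_div₀ zero_le_one (by positivity) hle
  have hsqrt2 : √2 < 2 := by
    rw [Real.sqrt_lt' two_pos]
    norm_num
  rw [Real.sqrt_mul zero_le_two] at hlower
  nlinarith [Real.sqrt_nonneg 2, Real.sqrt_nonneg γ]

theorem stmt1 {V : Type*} [Fintype V] (G : SimpleGraph V) (γ : ℝ)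
    (hγ0 : 0 < γ) (hγ1 : γ ≤ 1 / 16)
    (h : VectorColorable G 2 γ) :
    ∀ (a : V) (w : G.Walk a a), w.IsCycle → Odd w.length →
      ¬ ((w.length : ℝ) ≤ 1 / (8 * Real.sqrt γ)) :=
  stmt1_general G γ h
end

section
/- There is an absolute constant C > 0 such that the following holds for every real 0 < ε < 1/4 and every finite simple graph G on n ≥ 2 vertices: if every nonempty induced subgraph of G on m vertices contains an independent set of size at least m^{1-2ε}, then G admits a proper vertex coloring using at most C · n^{2ε} · ln n colors. -/
/-!
Put `δ = n ^ (-2ε)`. Since `m ≤ n`, the hypothesis gives every nonempty vertex set `S` an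
independent subset of size at least `m ^ (1 - 2ε) ≥ δ m`. Repeatedly removing such a set as a new
colour class shrinks the remaining set by a factor `1 - δ ≤ exp (-δ)` at each step, so after
`K = ⌊n ^ (2ε) log n⌋ + 1` steps fewer than `n · exp (-δ K) < 1` vertices, i.e. none, remain.
Finally `K ≤ 3 n ^ (2ε) log n` because `n ^ (2ε) log n ≥ log 2 > 1 / 2`.
-/

open Finset Real

namespace SimpleGraph

variable {V : Type*} {G : SimpleGraph V}

theorem Colorable.induce_succ_of_isIndepSet {s t : Set V} {k : ℕ} (hs : G.IsIndepSet s)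
    (h : (G.induce (t \ s)).Colorable k) : (G.induce t).Colorable (k + 1) := by
  obtain ⟨c⟩ := h
  classical
  refine ⟨Coloring.mk
    (fun v => if hv : v.1 ∈ s then Fin.last k else (c ⟨v, v.2, hv⟩).castSucc) ?_⟩
  rintro ⟨v, hvt⟩ ⟨w, hwt⟩ hadj
  change G.Adj v w at hadj
  by_cases hv : v ∈ s <;> by_cases hw : w ∈ s <;> simp only [hv, hw, dite_true, dite_false]
  · exact absurd hadj (hs hv hw hadj.ne)
  · exact (Fin.castSucc_lt_last _).ne'
  · exact (Fin.castSucc_lt_last _).ne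
  · exact fun hvw => c.valid (by exact hadj) (Fin.castSucc_injective _ hvw)

theorem colorable_induce_of_one_sub_pow_mul_card_lt_one {δ : ℝ} (hδ : δ ≤ 1)
    (H : ∀ S : Finset V, S.Nonempty → ∃ I ⊆ S, G.IsIndepSet I ∧ δ * #S ≤ #I)
    (k : ℕ) (S : Finset V) (hS : (1 - δ) ^ k * #S < 1) : (G.induce S).Colorable k := by
  classical
  have colorable_empty (k : ℕ) : (G.induce (∅ : Finset V)).Colorable k := by
    have : IsEmpty ((∅ : Finset V) : Set V) := by simp
    exact .of_isEmpty k
  induction k generalizing S with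
  | zero =>
    obtain rfl : S = ∅ := by simpa using hS
    exact colorable_empty 0
  | succ k ih =>
    obtain rfl | hSne := S.eq_empty_or_nonempty
    · exact colorable_empty (k + 1)
    obtain ⟨I, hIS, hI, hIcard⟩ := H S hSne
    have hcard : (#(S \ I) : ℝ) ≤ (1 - δ) * #S := by
      rw [card_sdiff_of_subset hIS, Nat.cast_sub (card_le_card hIS)]
      linarith
    have hrest : (1 - δ) ^ k * #(S \ I) < 1 :=
      calc (1 - δ) ^ k * #(S \ I) ≤ (1 - δ) ^ k * ((1 - δ) * #S) :=
            mul_le_mul_of_nonneg_left hcard (pow_nonneg (by linarith) k)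
        _ = (1 - δ) ^ (k + 1) * #S := by ring
        _ < 1 := hS
    have := ih (S \ I) hrest
    rw [coe_sdiff] at this
    exact this.induce_succ_of_isIndepSet hI

end SimpleGraph

theorem Real.rpow_neg_mul_le_rpow_one_sub {a m n : ℝ} (ha : 0 ≤ a) (hm : 0 < m) (hmn : m ≤ n) :
    n ^ (-a) * m ≤ m ^ (1 - a) :=
  calc n ^ (-a) * m ≤ m ^ (-a) * m :=
        mul_le_mul_of_nonneg_right (rpow_le_rpow_of_nonpos hm hmn (by linarith)) hm.le
    _ = m ^ (1 - a) := by rw [sub_eq_neg_add, rpow_add hm, rpow_one]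

theorem Real.one_sub_pow_mul_lt_one_of_log_lt {δ x : ℝ} {k : ℕ} (hδ : δ ≤ 1) (hx : 0 < x)
    (h : log x < δ * k) : (1 - δ) ^ k * x < 1 :=
  calc (1 - δ) ^ k * x ≤ exp (-δ) ^ k * x :=
        mul_le_mul_of_nonneg_right
          (pow_le_pow_left₀ (by linarith) (one_sub_le_exp_neg δ) k) hx.le
    _ = exp (-(δ * k)) * exp (log x) := by rw [← exp_nat_mul, exp_log hx]; ring_nf
    _ < 1 := by rw [← exp_add, exp_lt_one_iff]; linarith

theorem stmt3 : ∃ C : ℝ, 0 < C ∧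
    ∀ (ε : ℝ), 0 < ε → ε < 1 / 4 →
    ∀ (V : Type) [Fintype V] (G : SimpleGraph V),
      2 ≤ Fintype.card V →
      (∀ S : Finset V, S.Nonempty →
        ∃ I : Finset V, I ⊆ S ∧ (∀ i ∈ I, ∀ j ∈ I, ¬ G.Adj i j) ∧
          (S.card : ℝ) ^ (1 - 2 * ε) ≤ (I.card : ℝ)) →
      ∃ k : ℕ, (k : ℝ) ≤ C * (Fintype.card V : ℝ) ^ (2 * ε) *
          Real.log (Fintype.card V) ∧ G.Colorable k := by
  refine ⟨3, by norm_num, fun ε hε _ V _ G hV H => ?_⟩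
  have hn : (2 : ℝ) ≤ Fintype.card V := by exact_mod_cast hV
  set n : ℝ := (Fintype.card V : ℝ)
  set δ := n ^ (-(2 * ε))
  set x := n ^ (2 * ε) * log n
  have hδ : δ ≤ 1 := rpow_le_one_of_one_le_of_nonpos (by linarith) (by linarith)
  have hδx : δ * x = log n := by
    rw [← mul_assoc, ← rpow_add (by linarith), neg_add_cancel, rpow_zero, one_mul]
  have hx : 1 / 2 < x :=
    calc 1 / 2 < log 2 := by linarith [log_two_gt_d9]
      _ ≤ log n := log_le_log (by norm_num) hn
      _ ≤ x := le_mul_of_one_le_left (by positivity) (one_le_rpow (by linarith) (by positivity))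
  refine ⟨⌊x⌋₊ + 1, ?_, ?_⟩
  · push_cast
    linarith [Nat.floor_le (by linarith : 0 ≤ x)]
  have hindep (S : Finset V) (hS : S.Nonempty) : ∃ I ⊆ S, G.IsIndepSet I ∧ δ * #S ≤ #I := by
    obtain ⟨I, hIS, hI, hIcard⟩ := H S hS
    refine ⟨I, hIS, fun i hi j hj _ => hI i hi j hj, le_trans ?_ hIcard⟩
    exact rpow_neg_mul_le_rpow_one_sub (by positivity) (by exact_mod_cast hS.card_pos)
      (Nat.cast_le.mpr (card_le_univ S))
  have hK : log n < δ * (⌊x⌋₊ + 1 : ℕ) := by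
    rw [← hδx]
    exact mul_lt_mul_of_pos_left (by exact_mod_cast Nat.lt_floor_add_one x) (by positivity)
  have hcol := SimpleGraph.colorable_induce_of_one_sub_pow_mul_card_lt_one hδ hindep _ univ
    (by simpa using one_sub_pow_mul_lt_one_of_log_lt hδ (by linarith) hK)
  rw [coe_univ] at hcol
  exact hcol.of_hom G.induceUnivIso.symm.toHom
end

section
/- Let v_i, v_j be unit vectors in a real inner product space with ⟨v_i, v_j⟩ = -1/2 + α for some 0 ≤ α ≤ 1/2, and define u = ((1/2 - α)·v_i + v_j)/√(3/4 + α - α²). Then u is a unit vector, and for every vector r and every real β ≥ 0 with ⟨v_i, r⟩ ≥ β and ⟨v_j, r⟩ ≥ β, one has ⟨u, r⟩ ≥ ((3/2 - α)/√(3/4 + α - α²)) · β. -/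
/-! The vector `w = (1/2 - α) • vᵢ + vⱼ` has `‖w‖² = (1/2 - α)² + 2(1/2 - α)(α - 1/2) + 1 = 3/4 + α - α²`,
so `u = w / √(3/4 + α - α²)` is `w` normalised. Since `1/2 - α ≥ 0`, pairing `w` with `r` gives
`⟪w, r⟫ ≥ (1/2 - α) β + β = (3/2 - α) β`, and dividing by `‖w‖` gives the bound. -/

open scoped RealInnerProductSpace

section

variable {E : Type*} [NormedAddCommGroup E] [InnerProductSpace ℝ E]

theorem norm_smul_add_sq (a : ℝ) (x y : E) :
    ‖a • x + y‖ ^ 2 = a ^ 2 * ‖x‖ ^ 2 + 2 * a * ⟪x, y⟫ + ‖y‖ ^ 2 := by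
  rw [norm_add_sq_real, norm_smul, real_inner_smul_left, mul_pow, Real.norm_eq_abs, sq_abs]
  ring

theorem add_one_mul_le_inner_smul_add {a β : ℝ} {x y r : E} (ha : 0 ≤ a)
    (hx : β ≤ ⟪x, r⟫) (hy : β ≤ ⟪y, r⟫) : (a + 1) * β ≤ ⟪a • x + y, r⟫ := by
  rw [inner_add_left, real_inner_smul_left]
  nlinarith [mul_le_mul_of_nonneg_left hx ha]

end

theorem stmt15 {E : Type*} [NormedAddCommGroup E] [InnerProductSpace ℝ E]
    (vi vj : E) (α : ℝ) (h0 : 0 ≤ α) (h1 : α ≤ 1 / 2)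
    (hvi : ‖vi‖ = 1) (hvj : ‖vj‖ = 1)
    (hinner : (inner ℝ vi vj : ℝ) = -(1 / 2) + α) :
    ‖(Real.sqrt (3 / 4 + α - α ^ 2))⁻¹ • ((1 / 2 - α) • vi + vj)‖ = 1 ∧
    ∀ (r : E) (β : ℝ), 0 ≤ β → β ≤ (inner ℝ vi r : ℝ) → β ≤ (inner ℝ vj r : ℝ) →
      ((3 / 2 - α) / Real.sqrt (3 / 4 + α - α ^ 2)) * β ≤
        (inner ℝ ((Real.sqrt (3 / 4 + α - α ^ 2))⁻¹ • ((1 / 2 - α) • vi + vj)) r : ℝ) := by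
  have hs : 0 < 3 / 4 + α - α ^ 2 := by nlinarith
  have hw : ‖(1 / 2 - α) • vi + vj‖ = √(3 / 4 + α - α ^ 2) := by
    rw [← Real.sqrt_sq (norm_nonneg _), norm_smul_add_sq, hvi, hvj, hinner]
    ring_nf
  refine ⟨?_, fun r β _ hi hj => ?_⟩
  · rw [← hw]
    refine norm_smul_inv_norm (norm_pos_iff.mp ?_)
    exact hw ▸ Real.sqrt_pos.mpr hs
  · have key := add_one_mul_le_inner_smul_add (by linarith : 0 ≤ 1 / 2 - α) hi hj
    calc (3 / 2 - α) / √(3 / 4 + α - α ^ 2) * β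
        = (√(3 / 4 + α - α ^ 2))⁻¹ * ((1 / 2 - α + 1) * β) := by ring
      _ ≤ _ := by rw [real_inner_smul_left]; gcongr
end

section
/- Let G = (V,E) be a finite simple graph that is (3,γ)-vector colorable for some 0 < γ < 1/10. Then for every vertex i ∈ V, the subgraph of G induced on the neighborhood N(i) contains no odd cycle of length at most 1/(16√γ). -/
open RealInnerProductSpace

namespace SimpleGraph.Walk

variable {V E : Type*} [SeminormedAddCommGroup E] [Module ℝ E] {G : SimpleGraph V}
  (u : V → E) {C : ℝ}

theorem norm_sub_neg_one_pow_smul_le_s16 (hedge : ∀ x y, G.Adj x y → ‖u x + u y‖ ≤ C)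
    {a b : V} (w : G.Walk a b) : ‖u a - (-1 : ℝ) ^ w.length • u b‖ ≤ w.length * C := by
  induction w with
  | nil => simp
  | @cons x y z hxy p ih =>
    have hsplit : u x - (-1 : ℝ) ^ (p.length + 1) • u z
        = (u x + u y) - (u y - (-1 : ℝ) ^ p.length • u z) := by
      rw [pow_succ]
      module
    calc ‖u x - (-1 : ℝ) ^ (p.length + 1) • u z‖
        ≤ ‖u x + u y‖ + ‖u y - (-1 : ℝ) ^ p.length • u z‖ := hsplit ▸ norm_sub_le _ _
      _ ≤ C + p.length * C := add_le_add (hedge x y hxy) ih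
      _ = (p.cons hxy).length * C := by rw [length_cons]; push_cast; ring

theorem two_mul_norm_le_of_odd_length_s16 [NormSMulClass ℝ E] (hedge : ∀ x y, G.Adj x y → ‖u x + u y‖ ≤ C)
    {a : V} (w : G.Walk a a) (hodd : Odd w.length) : 2 * ‖u a‖ ≤ w.length * C := by
  have hflip : u a - (-1 : ℝ) ^ w.length • u a = (2 : ℝ) • u a := by
    rw [hodd.neg_one_pow]
    module
  have := norm_sub_neg_one_pow_smul_le_s16 u hedge w
  rwa [hflip, norm_smul, Real.norm_two] at this

end SimpleGraph.Walk

section UnitVectors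

variable {F : Type*} [SeminormedAddCommGroup F] [InnerProductSpace ℝ F] {x y z : F} {γ : ℝ}

theorem norm_add_add_le_sqrt_of_inner_le (hx : ‖x‖ = 1) (hy : ‖y‖ = 1) (hz : ‖z‖ = 1)
    (hxy : ⟪x, y⟫ ≤ -(1 / 2) + γ) (hxz : ⟪x, z⟫ ≤ -(1 / 2) + γ) (hyz : ⟪y, z⟫ ≤ -(1 / 2) + γ) :
    ‖x + y + z‖ ≤ √(6 * γ) := by
  have hsq : ‖x + y + z‖ ^ 2 ≤ 6 * γ := by
    rw [norm_add_sq_real, norm_add_sq_real, inner_add_left, hx, hy, hz]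
    linarith
  simpa [abs_of_nonneg (norm_nonneg _)] using Real.abs_le_sqrt hsq

theorem half_le_norm_add_half_smul (hx : ‖x‖ = 1) (hz : ‖z‖ = 1) :
    1 / 2 ≤ ‖x + (1 / 2 : ℝ) • z‖ := by
  have := norm_sub_le_norm_add x ((1 / 2 : ℝ) • z)
  rw [norm_smul, hx, hz] at this
  norm_num at this ⊢
  linarith

end UnitVectors

theorem mul_sqrt_six_mul_lt_one {γ ℓ : ℝ} (hℓ : ℓ ≤ 1 / (16 * √γ)) :
    ℓ * √(6 * γ) < 1 := by
  -- for `γ ≤ 0` the left side is `0`, since then `√γ = 0` and `1 / 0 = 0`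
  have hγ : 1 / (16 * √γ) * √γ ≤ 1 / 16 := by
    rcases (Real.sqrt_nonneg γ).eq_or_lt with h0 | hpos
    · simp [← h0]
    · exact (by field_simp : 1 / (16 * √γ) * √γ = 1 / 16).le
  have hsix : √6 < 16 := (Real.sqrt_lt' (by norm_num)).2 (by norm_num)
  calc ℓ * √(6 * γ) = √6 * (ℓ * √γ) := by rw [Real.sqrt_mul (by norm_num)]; ring
    _ ≤ √6 * (1 / (16 * √γ) * √γ) := by gcongr
    _ ≤ √6 * (1 / 16) := by gcongr
    _ < 1 := by linarith

theorem stmt16_general {V : Type*} (G : SimpleGraph V) (γ : ℝ)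
    (h : VectorColorable G 3 γ) (i : V) :
    ∀ (a : ↥(G.neighborSet i)) (w : (G.induce (G.neighborSet i)).Walk a a),
      w.IsCycle → Odd w.length → ¬ ((w.length : ℝ) ≤ 1 / (16 * Real.sqrt γ)) := by
  obtain ⟨d, v, hunit, hadj⟩ := h
  have hadj : ∀ x y, G.Adj x y → ⟪v x, v y⟫ ≤ -(1 / 2) + γ := by
    norm_num at hadj ⊢
    exact hadj
  intro a w _ hodd hle
  let u : G.neighborSet i → EuclideanSpace ℝ (Fin d) := fun x ↦ v x + (1 / 2 : ℝ) • v i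
  have hedge (x y) (hxy : (G.induce (G.neighborSet i)).Adj x y) : ‖u x + u y‖ ≤ √(6 * γ) := by
    rw [show u x + u y = v x + v y + v i by simp only [u]; module]
    refine norm_add_add_le_sqrt_of_inner_le (hunit x) (hunit y) (hunit i) (hadj x y hxy) ?_ ?_
    · rw [real_inner_comm]; exact hadj i x x.2
    · rw [real_inner_comm]; exact hadj i y y.2
  have hwalk := w.two_mul_norm_le_of_odd_length_s16 u hedge hodd
  have hua := half_le_norm_add_half_smul (hunit a) (hunit i)
  exact (mul_sqrt_six_mul_lt_one hle).not_ge (by linarith)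

theorem stmt16 {V : Type*} [Fintype V] (G : SimpleGraph V) (γ : ℝ)
    (hγ0 : 0 < γ) (hγ1 : γ < 1 / 10)
    (h : VectorColorable G 3 γ) (i : V) :
    ∀ (a : ↥(G.neighborSet i)) (w : (G.induce (G.neighborSet i)).Walk a a),
      w.IsCycle → Odd w.length → ¬ ((w.length : ℝ) ≤ 1 / (16 * Real.sqrt γ)) :=
  stmt16_general G γ h i
end
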